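/- Let α ∈ ℝ with 0 < α < 1 and λ ∈ ℝ. The Gauss equation in codimension 1 with curvature components R_{1212} = −1 − 3λ²(α−1)², R_{1313} = −α² + λ²(α−1)², R_{2323} = −α + λ²(α−1)², R_{1213} = −2λα(α−1), R_{1223} = R_{1323} = 0 (these are the curvature components of the solvable Lie algebra r_{3,α} with its Milnor-type orthonormal frame with parameter λ) has a solution if and only if √(√((1+α²)² + 12α²) − (1+α²)) / (√6·(1−α)) < |λ| < √α/(1−α). -/

import Mathlib

/-!
The six Gauss equations say that the symmetric matrix `h` has adjugate `gaussMatrix R`. For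
`3 × 3` matrices `det (adj h) = (det h)²` and `adj (adj h) = det h • h`, so a symmetric `M`
with `adj M ≠ 0` is the adjugate of a symmetric matrix iff `det M > 0`, and then
`h = adj M / √(det M)` works. For the curvature of `r_{3,α}`, writing `t = λ²(α - 1)²`,
`det M = (α - t)(3t² + (1 + α²)t - α²)`, and the two bounds on `|λ|` say exactly that `t < α`
and that `t` exceeds the positive root of `3t² + (1 + α²)t - α²`.
-/

/-- A solution of the Gauss equation in codimension 1 exists for the given curvature
components. (The family `h i j` is encoded by the six entries `h11, h12, h13, h22,
h23, h33`, symmetry `h i j = h j i` being automatic.) -/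
def GaussSolvable (R1212 R1313 R2323 R1213 R1223 R1323 : ℝ) : Prop :=
  ∃ h11 h12 h13 h22 h23 h33 : ℝ,
    h11 * h22 - h12 ^ 2 = R1212 ∧
    h11 * h33 - h13 ^ 2 = R1313 ∧
    h22 * h33 - h23 ^ 2 = R2323 ∧
    h11 * h23 - h13 * h12 = R1213 ∧
    h12 * h23 - h13 * h22 = R1223 ∧
    h12 * h33 - h13 * h23 = R1323

namespace Matrix

theorem IsSymm.exists_eq_fin_three {α : Type*} {A : Matrix (Fin 3) (Fin 3) α} (hA : A.IsSymm) :
    ∃ x y z u v w, A = !![x, y, z; y, u, v; z, v, w] :=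
  ⟨A 0 0, A 0 1, A 0 2, A 1 1, A 1 2, A 2 2, by
    have := eta_fin_three A; rwa [hA.apply 0 1, hA.apply 0 2, hA.apply 1 2] at this⟩

variable {n : Type*} [Fintype n] [DecidableEq n]

theorem det_adjugate_nonneg {R : Type*} [CommRing R] [LinearOrder R] [IsStrictOrderedRing R]
    (hn : Odd (Fintype.card n)) (A : Matrix n n R) : 0 ≤ A.adjugate.det := by
  rw [det_adjugate]
  exact (Nat.Odd.sub_odd hn odd_one).pow_nonneg _

theorem adjugate_adjugate_eq_zero_of_det_adjugate_eq_zero {R : Type*} [CommRing R]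
    [NoZeroDivisors R] (hn : 3 ≤ Fintype.card n) {A : Matrix n n R} (h : A.adjugate.det = 0) :
    A.adjugate.adjugate = 0 := by
  rw [det_adjugate, pow_eq_zero_iff (by omega)] at h
  rw [adjugate_adjugate A (by omega), h, zero_pow (by omega), zero_smul]

theorem exists_isSymm_adjugate_eq_of_det_pos (hn : Fintype.card n = 3) {M : Matrix n n ℝ}
    (hM : M.IsSymm) (hdet : 0 < M.det) : ∃ A : Matrix n n ℝ, A.IsSymm ∧ A.adjugate = M := by
  refine ⟨(√M.det)⁻¹ • M.adjugate, hM.adjugate.smul _, ?_⟩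
  rw [adjugate_smul, adjugate_adjugate M (by omega), hn, smul_smul, inv_pow,
    Real.sq_sqrt hdet.le, pow_one, inv_mul_cancel₀ hdet.ne', one_smul]

theorem exists_isSymm_adjugate_eq_iff_det_pos (hn : Fintype.card n = 3) {M : Matrix n n ℝ}
    (hM : M.IsSymm) (hadj : M.adjugate ≠ 0) :
    (∃ A : Matrix n n ℝ, A.IsSymm ∧ A.adjugate = M) ↔ 0 < M.det := by
  refine ⟨?_, exists_isSymm_adjugate_eq_of_det_pos hn hM⟩
  rintro ⟨A, -, rfl⟩
  refine (det_adjugate_nonneg (by rw [hn]; decide) A).lt_of_ne' fun hdet => hadj ?_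
  exact adjugate_adjugate_eq_zero_of_det_adjugate_eq_zero hn.ge hdet

end Matrix

open Matrix

def gaussMatrix (R1212 R1313 R2323 R1213 R1223 R1323 : ℝ) : Matrix (Fin 3) (Fin 3) ℝ :=
  !![R2323, -R1323, R1223; -R1323, R1313, -R1213; R1223, -R1213, R1212]

theorem gaussMatrix_isSymm (R1212 R1313 R2323 R1213 R1223 R1323 : ℝ) :
    (gaussMatrix R1212 R1313 R2323 R1213 R1223 R1323).IsSymm := by
  ext i j; fin_cases i <;> fin_cases j <;> rfl

theorem gaussSolvable_iff_exists_isSymm_adjugate_eq {R1212 R1313 R2323 R1213 R1223 R1323 : ℝ} :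
    GaussSolvable R1212 R1313 R2323 R1213 R1223 R1323 ↔
      ∃ A : Matrix (Fin 3) (Fin 3) ℝ, A.IsSymm ∧
        A.adjugate = gaussMatrix R1212 R1313 R2323 R1213 R1223 R1323 := by
  rw [gaussMatrix]
  constructor
  · rintro ⟨h11, h12, h13, h22, h23, h33, e1, e2, e3, e4, e5, e6⟩
    refine ⟨!![h11, h12, h13; h12, h22, h23; h13, h23, h33], ?_, ?_⟩
    · ext i j; fin_cases i <;> fin_cases j <;> rfl
    · rw [adjugate_fin_three_of, ← e1, ← e2, ← e3, ← e4, ← e5, ← e6]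
      ext i j; fin_cases i <;> fin_cases j <;> simp <;> ring
  · rintro ⟨A, hA, hadj⟩
    obtain ⟨x, y, z, u, v, w, rfl⟩ := hA.exists_eq_fin_three
    simp only [adjugate_fin_three_of, EmbeddingLike.apply_eq_iff_eq, vecCons_inj,
      and_true] at hadj
    obtain ⟨⟨e3, e6, e5⟩, ⟨-, e2, e4⟩, -, -, e1⟩ := hadj
    exact ⟨x, y, z, u, v, w, by linear_combination e1, by linear_combination e2,
      by linear_combination e3, by linear_combination -e4, by linear_combination e5,
      by linear_combination -e6⟩

/-- `gaussMatrix` of the curvature components of `(r_{3,α}, ⟨·,·⟩_λ)`, with `α = a`, `λ = l`. -/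
def r3CurvatureMatrix (a l : ℝ) : Matrix (Fin 3) (Fin 3) ℝ :=
  gaussMatrix (-1 - 3 * l ^ 2 * (a - 1) ^ 2) (-a ^ 2 + l ^ 2 * (a - 1) ^ 2)
    (-a + l ^ 2 * (a - 1) ^ 2) (-2 * l * a * (a - 1)) 0 0

theorem det_r3CurvatureMatrix (a l : ℝ) :
    (r3CurvatureMatrix a l).det = (a - l ^ 2 * (a - 1) ^ 2) *
      (3 * (l ^ 2 * (a - 1) ^ 2) ^ 2 + (1 + a ^ 2) * (l ^ 2 * (a - 1) ^ 2) - a ^ 2) := by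
  simp only [r3CurvatureMatrix, gaussMatrix, det_fin_three, of_apply, cons_val', cons_val_zero,
    cons_val_one, cons_val, cons_val_fin_one]
  ring

theorem adjugate_r3CurvatureMatrix_ne_zero {a : ℝ} (ha : 0 < a) (l : ℝ) :
    (r3CurvatureMatrix a l).adjugate ≠ 0 := by
  -- The `(1, 1)` cofactor vanishes only at `t = α`, where the `(0, 0)` cofactor is `-α(1 + α)²`.
  intro h0
  have e00 := congrFun₂ h0 0 0
  have e11 := congrFun₂ h0 1 1
  simp only [r3CurvatureMatrix, gaussMatrix, adjugate_fin_three_of, neg_zero, neg_mul, neg_neg,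
    zero_mul, add_zero, sub_self, mul_zero, sub_zero, of_apply, cons_val', cons_val_zero,
    cons_val_fin_one, Matrix.zero_apply, cons_val_one, mul_eq_zero] at e00 e11
  set t := l ^ 2 * (a - 1) ^ 2
  rcases e11 with hta | hP
  · have : a * (1 + a) ^ 2 = 0 := by
      linear_combination -e00 + (-3 * (t + a) - (1 + a ^ 2)) * hta
    exact (mul_pos ha (by positivity)).ne' this
  · have : 0 ≤ t := by positivity
    linarith

theorem gaussSolvable_r3_iff {a : ℝ} (ha : 0 < a) (l : ℝ) :
    GaussSolvable (-1 - 3 * l ^ 2 * (a - 1) ^ 2) (-a ^ 2 + l ^ 2 * (a - 1) ^ 2)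
        (-a + l ^ 2 * (a - 1) ^ 2) (-2 * l * a * (a - 1)) 0 0 ↔
      l ^ 2 * (a - 1) ^ 2 < a ∧
        a ^ 2 < 3 * (l ^ 2 * (a - 1) ^ 2) ^ 2 + (1 + a ^ 2) * (l ^ 2 * (a - 1) ^ 2) := by
  rw [gaussSolvable_iff_exists_isSymm_adjugate_eq, ← r3CurvatureMatrix,
    exists_isSymm_adjugate_eq_iff_det_pos (M := r3CurvatureMatrix a l) (Fintype.card_fin 3)
      (gaussMatrix_isSymm ..) (adjugate_r3CurvatureMatrix_ne_zero ha l),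
    det_r3CurvatureMatrix, mul_pos_iff, sub_pos, sub_pos]
  set t := l ^ 2 * (a - 1) ^ 2
  have ht : 0 ≤ t := by positivity
  refine or_iff_left fun ⟨hat, hq⟩ => ?_
  nlinarith

theorem sqrt_discrim_sub_lt_iff {p b c x : ℝ} (hp : 0 < p) (hc : 0 ≤ c)
    (hx : 0 ≤ 2 * p * x + b) :
    √(b ^ 2 + 4 * p * c) - b < 2 * p * x ↔ c < p * x ^ 2 + b * x := by
  have hdisc : 0 ≤ b ^ 2 + 4 * p * c := by positivity
  rw [sub_lt_iff_lt_add, Real.sqrt_lt hdisc hx,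
    show (2 * p * x + b) ^ 2 = b ^ 2 + 4 * p * (p * x ^ 2 + b * x) by ring,
    add_lt_add_iff_left, mul_lt_mul_iff_right₀ (by positivity)]

theorem r3_lambda_bounds_iff {a : ℝ} (ha : 0 < a) (ha' : a < 1) (l : ℝ) :
    (√(√((1 + a ^ 2) ^ 2 + 12 * a ^ 2) - (1 + a ^ 2)) / (√6 * (1 - a)) < |l| ∧
        |l| < √a / (1 - a)) ↔
      a ^ 2 < 3 * (l ^ 2 * (a - 1) ^ 2) ^ 2 + (1 + a ^ 2) * (l ^ 2 * (a - 1) ^ 2) ∧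
        l ^ 2 * (a - 1) ^ 2 < a := by
  have h1a : 0 < 1 - a := sub_pos.2 ha'
  have ht : l ^ 2 * (a - 1) ^ 2 = (|l| * (1 - a)) ^ 2 := by rw [mul_pow, sq_abs]; ring
  have hx : 0 ≤ |l| * (1 - a) := by positivity
  have hroot : 1 + a ^ 2 ≤ √((1 + a ^ 2) ^ 2 + 12 * a ^ 2) :=
    Real.le_sqrt_of_sq_le (le_add_of_nonneg_right (by positivity))
  have hquad := sqrt_discrim_sub_lt_iff (p := 3) (b := 1 + a ^ 2) (c := a ^ 2)
    (x := (|l| * (1 - a)) ^ 2) (by norm_num) (by positivity) (by positivity)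
  rw [show (4 : ℝ) * 3 = 12 by norm_num, show (2 : ℝ) * 3 = 6 by norm_num] at hquad
  have h6 : (|l| * (√6 * (1 - a))) ^ 2 = 6 * (|l| * (1 - a)) ^ 2 := by
    rw [mul_pow, mul_pow, Real.sq_sqrt (by norm_num)]; ring
  rw [ht, div_lt_iff₀ (by positivity), lt_div_iff₀ h1a, Real.lt_sqrt hx,
    Real.sqrt_lt (sub_nonneg.2 hroot) (by positivity), h6, hquad]

/-- Proposition 4.6 (3): for `0 < α < 1`, the metric Lie algebra
`(r_{3,α}, ⟨·,·⟩_λ)` has a solution of the Gauss equation in codimension 1 if and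
only if `√(√((1+α²)² + 12α²) − (1+α²)) / (√6 (1−α)) < |λ| < √α/(1−α)`. -/
theorem r3_alpha_pos_gauss_solvable_iff (a l : ℝ) (ha : 0 < a) (ha' : a < 1) :
    GaussSolvable (-1 - 3 * l ^ 2 * (a - 1) ^ 2) (-a ^ 2 + l ^ 2 * (a - 1) ^ 2)
        (-a + l ^ 2 * (a - 1) ^ 2) (-2 * l * a * (a - 1)) 0 0 ↔
      Real.sqrt (Real.sqrt ((1 + a ^ 2) ^ 2 + 12 * a ^ 2) - (1 + a ^ 2)) /
          (Real.sqrt 6 * (1 - a)) < |l| ∧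
        |l| < Real.sqrt a / (1 - a) := by
  rw [gaussSolvable_r3_iff ha, r3_lambda_bounds_iff ha ha', and_comm]
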